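/- arXiv:math/0304155 — 6 statements merged into one kernel-verified Lean document; each statement's English description precedes it below -/
import Mathlib

section
/- Let q, ρ, y be real numbers and let μ be a probability measure on ℝ with finite moments of all orders such that ∫ H_n(x|q) dμ(x) = ρ^n·H_n(y|q) for all n ≥ 1. Then, with a = ρ·y and b = ρ², the Al-Salam–Chihara polynomials satisfy ∫ p_n(x|q,a,b) dμ(x) = 0 for all n ≥ 1. -/
/-!
Write `p_k` for `asc q (ρ y) ρ² k`. In this basis the `q`-Hermite polynomials expand as
`H_n(x) = ∑_k [n choose k]_q ρ^(n-k) H_(n-k)(y) p_k(x)`: both sides satisfy the `q`-Hermite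
recurrence, by the `q`-Pascal rule, the recurrence of `H_j(y)` and the absorption identities
`[k+1] [n+1 choose k+1] = [n+1] [n choose k]` and `[n-k] [n choose k] = [k+1] [n choose k+1]`.
Integrating against `μ`, the `k = 0` term is `ρ^n H_n(y) = ∫ H_n dμ` and the `k = n` term is
`∫ p_n dμ`, so strong induction on `n` makes every `∫ p_n dμ` with `n ≥ 1` vanish.
-/

open MeasureTheory Finset

noncomputable section

/-- The `q`-integer `[n]_q = 1 + q + ⋯ + q^{n-1}`. -/
def qInt (q : ℝ) (n : ℕ) : ℝ := ∑ i ∈ Finset.range n, q ^ i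

/-- The (renormalized) continuous `q`-Hermite polynomials, as functions:
`H_{-1} = 0`, `H_0 = 1`, `H_{n+1}(x) = x H_n(x) - [n]_q H_{n-1}(x)`. -/
def qHermite (q : ℝ) : ℕ → ℝ → ℝ
  | 0 => fun _ => 1
  | 1 => fun x => x
  | n + 2 => fun x => x * qHermite q (n + 1) x - qInt q (n + 1) * qHermite q n x

/-- The renormalized Al-Salam–Chihara polynomials, as functions:
`p_{-1} = 0`, `p_0 = 1`,
`p_{n+1}(x) = (x - a q^n) p_n(x) - (1 - b q^{n-1}) [n]_q p_{n-1}(x)`. -/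
def asc (q a b : ℝ) : ℕ → ℝ → ℝ
  | 0 => fun _ => 1
  | 1 => fun x => x - a
  | n + 2 => fun x => (x - a * q ^ (n + 1)) * asc q a b (n + 1) x
      - (1 - b * q ^ n) * qInt q (n + 1) * asc q a b n x

theorem qInt_zero (q : ℝ) : qInt q 0 = 0 := sum_range_zero _

@[simp]
theorem qInt_one (q : ℝ) : qInt q 1 = 1 := by simp [qInt]

theorem qInt_add (q : ℝ) (m n : ℕ) : qInt q (m + n) = qInt q m + q ^ m * qInt q n := by
  simp only [qInt, sum_range_add, pow_add, mul_sum]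

theorem qInt_add_sub (q : ℝ) {m n : ℕ} (h : m ≤ n) :
    qInt q m + q ^ m * qInt q (n - m) = qInt q n := by
  rw [← qInt_add, Nat.add_sub_cancel' h]

def qBinom (q : ℝ) : ℕ → ℕ → ℝ
  | _, 0 => 1
  | 0, _ + 1 => 0
  | n + 1, k + 1 => qBinom q n k + q ^ (k + 1) * qBinom q n (k + 1)

@[simp]
theorem qBinom_zero_right (q : ℝ) (n : ℕ) : qBinom q n 0 = 1 := by cases n <;> rfl

theorem qBinom_succ_succ (q : ℝ) (n k : ℕ) :
    qBinom q (n + 1) (k + 1) = qBinom q n k + q ^ (k + 1) * qBinom q n (k + 1) := rfl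

theorem qBinom_eq_zero_of_lt (q : ℝ) : ∀ {n k : ℕ}, n < k → qBinom q n k = 0
  | 0, _ + 1, _ => rfl
  | n + 1, k + 1, h => by
    rw [qBinom_succ_succ, qBinom_eq_zero_of_lt q (by omega : n < k),
      qBinom_eq_zero_of_lt q (by omega : n < k + 1)]
    ring

@[simp]
theorem qBinom_self (q : ℝ) : ∀ n, qBinom q n n = 1
  | 0 => rfl
  | n + 1 => by
    rw [qBinom_succ_succ, qBinom_self q n, qBinom_eq_zero_of_lt q n.lt_succ_self]
    ring

theorem qInt_sub_mul_qBinom (q : ℝ) :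
    ∀ n k, qInt q (n - k) * qBinom q n k = qInt q (k + 1) * qBinom q n (k + 1)
  | 0, k => by simp [qInt_zero, qBinom_eq_zero_of_lt q k.succ_pos]
  | n + 1, 0 => by
    have ih := qInt_sub_mul_qBinom q n 0
    simp only [Nat.sub_zero, zero_add, qBinom_zero_right, mul_one, qInt_one, one_mul] at ih ⊢
    rw [qBinom_succ_succ, qBinom_zero_right, ← ih, add_comm n, qInt_add, qInt_one, pow_one]
  | n + 1, k + 1 => by
    have ih₀ := qInt_sub_mul_qBinom q n k
    have ih₁ := qInt_sub_mul_qBinom q n (k + 1)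
    rw [Nat.add_sub_add_right, qBinom_succ_succ, qBinom_succ_succ]
    rcases lt_or_ge k n with hk | hk
    · have split₀ := qInt_add_sub q (by omega : k + 1 ≤ n + 1)
      have split₁ := qInt_add_sub q (by omega : k + 2 ≤ n + 1)
      rw [Nat.add_sub_add_right] at split₀
      rw [show n + 1 - (k + 2) = n - (k + 1) by omega] at split₁
      linear_combination ih₀ + q ^ (k + 2) * ih₁ + qBinom q n (k + 1) * (split₀ - split₁)
    · rw [qBinom_eq_zero_of_lt q (by omega : n < k + 1),
        qBinom_eq_zero_of_lt q (by omega : n < k + 2), Nat.sub_eq_zero_of_le hk, qInt_zero]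
      ring

theorem qInt_mul_qBinom_succ (q : ℝ) (n k : ℕ) :
    qInt q (k + 1) * qBinom q (n + 1) (k + 1) = qInt q (n + 1) * qBinom q n k := by
  rcases le_or_gt k n with hk | hk
  · rw [qBinom_succ_succ, mul_add, mul_left_comm, ← qInt_sub_mul_qBinom,
      ← qInt_add_sub q (by omega : k + 1 ≤ n + 1), Nat.add_sub_add_right]
    ring
  · rw [qBinom_eq_zero_of_lt q (by omega : n + 1 < k + 1), qBinom_eq_zero_of_lt q hk]
    ring

theorem qHermite_succ_succ (q x : ℝ) (n : ℕ) :
    qHermite q (n + 2) x = x * qHermite q (n + 1) x - qInt q (n + 1) * qHermite q n x := rfl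

theorem asc_succ_succ (q a b x : ℝ) (n : ℕ) :
    asc q a b (n + 2) x = (x - a * q ^ (n + 1)) * asc q a b (n + 1) x
      - (1 - b * q ^ n) * qInt q (n + 1) * asc q a b n x := rfl

section Connection

variable (q ρ y : ℝ)

def connCoeff (n k : ℕ) : ℝ := qBinom q n k * ρ ^ (n - k) * qHermite q (n - k) y

theorem connCoeff_eq_zero_of_lt {n k : ℕ} (h : n < k) : connCoeff q ρ y n k = 0 := by
  simp [connCoeff, qBinom_eq_zero_of_lt q h]

@[simp]
theorem connCoeff_self (n : ℕ) : connCoeff q ρ y n n = 1 := by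
  simp [connCoeff, qHermite]

@[simp]
theorem connCoeff_zero_right (n : ℕ) : connCoeff q ρ y n 0 = ρ ^ n * qHermite q n y := by
  simp [connCoeff]

theorem connCoeff_succ_succ_zero (n : ℕ) :
    connCoeff q ρ y (n + 2) 0 = ρ * y * connCoeff q ρ y (n + 1) 0
      + (1 - ρ ^ 2) * connCoeff q ρ y (n + 1) 1 - qInt q (n + 1) * connCoeff q ρ y n 0 := by
  have h := qInt_mul_qBinom_succ q n 0
  simp only [zero_add, qInt_one, one_mul, qBinom_zero_right, mul_one] at h
  simp only [connCoeff_zero_right]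
  rw [connCoeff, h, Nat.add_sub_cancel, qHermite_succ_succ]
  ring

theorem connCoeff_succ_succ_succ (n k : ℕ) :
    connCoeff q ρ y (n + 2) (k + 1) = connCoeff q ρ y (n + 1) k
      + ρ * y * q ^ (k + 1) * connCoeff q ρ y (n + 1) (k + 1)
      + (1 - ρ ^ 2 * q ^ (k + 1)) * qInt q (k + 2) * connCoeff q ρ y (n + 1) (k + 2)
      - qInt q (n + 1) * connCoeff q ρ y n (k + 1) := by
  have pascal : connCoeff q ρ y (n + 2) (k + 1) = connCoeff q ρ y (n + 1) k
      + q ^ (k + 1) * qBinom q (n + 1) (k + 1) * ρ ^ (n + 1 - k) * qHermite q (n + 1 - k) y := by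
    simp only [connCoeff, qBinom_succ_succ, show n + 2 - (k + 1) = n + 1 - k by omega]
    ring
  rw [pascal]
  rcases lt_trichotomy n k with hk | rfl | hk
  · simp only [connCoeff_eq_zero_of_lt q ρ y (by omega : n + 1 < k + 1),
      connCoeff_eq_zero_of_lt q ρ y (by omega : n + 1 < k + 2),
      connCoeff_eq_zero_of_lt q ρ y (by omega : n < k + 1),
      qBinom_eq_zero_of_lt q (by omega : n + 1 < k + 1)]
    ring
  · simp only [connCoeff_self, connCoeff_eq_zero_of_lt q ρ y (by omega : n + 1 < n + 2),
      connCoeff_eq_zero_of_lt q ρ y (by omega : n < n + 1), qBinom_self,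
      show n + 1 - n = 1 by omega]
    simp only [qHermite]
    ring
  · obtain ⟨j, rfl⟩ := Nat.exists_eq_add_of_lt hk
    have absorb₁ := qInt_sub_mul_qBinom q (k + j + 2) (k + 1)
    have absorb₂ := qInt_mul_qBinom_succ q (k + j + 1) (k + 1)
    simp only [show k + j + 2 - (k + 1) = j + 1 by omega] at absorb₁
    simp only [connCoeff, show k + j + 1 + 1 - k = j + 2 by omega,
      show k + j + 1 + 1 - (k + 1) = j + 1 by omega, show k + j + 1 + 1 - (k + 2) = j by omega,
      show k + j + 1 - (k + 1) = j by omega, qHermite_succ_succ]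
    linear_combination (-(ρ ^ j * qHermite q j y)) * (q ^ (k + 1) * ρ ^ 2 * absorb₁ + absorb₂)

end Connection

section Expansion

variable {q a b : ℝ}

theorem mul_asc_zero (x : ℝ) : x * asc q a b 0 x = asc q a b 1 x + a * asc q a b 0 x := by
  simp only [asc]
  ring

theorem mul_asc_succ (k : ℕ) (x : ℝ) :
    x * asc q a b (k + 1) x = asc q a b (k + 2) x + a * q ^ (k + 1) * asc q a b (k + 1) x
      + (1 - b * q ^ k) * qInt q (k + 1) * asc q a b k x := by
  rw [asc_succ_succ]
  ring

theorem mul_sum_asc {c : ℕ → ℝ} {N : ℕ} (hc : ∀ k ≥ N, c k = 0) (x : ℝ) :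
    x * ∑ k ∈ range N, c k * asc q a b k x
      = (a * c 0 + (1 - b) * c 1) * asc q a b 0 x
        + ∑ k ∈ range N, (c k + a * q ^ (k + 1) * c (k + 1)
            + (1 - b * q ^ (k + 1)) * qInt q (k + 2) * c (k + 2)) * asc q a b (k + 1) x := by
  have extend : ∑ k ∈ range N, c k * asc q a b k x
      = ∑ k ∈ range (N + 1), c k * asc q a b k x := by
    rw [sum_range_succ, hc N le_rfl, zero_mul, add_zero]
  have expand : x * ∑ k ∈ range N, c (k + 1) * asc q a b (k + 1) x
      = ∑ k ∈ range N, c (k + 1) * asc q a b (k + 2) x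
        + ∑ k ∈ range N, a * q ^ (k + 1) * c (k + 1) * asc q a b (k + 1) x
        + ∑ k ∈ range N, (1 - b * q ^ k) * qInt q (k + 1) * c (k + 1) * asc q a b k x := by
    rw [mul_sum, ← sum_add_distrib, ← sum_add_distrib]
    refine sum_congr rfl fun k _ => ?_
    rw [mul_left_comm, mul_asc_succ]
    ring
  have shift : ∀ f : ℕ → ℝ, f N = 0 →
      ∑ k ∈ range N, f k = f 0 + ∑ k ∈ range N, f (k + 1) := fun f hf => by
    rw [← add_zero (∑ k ∈ range N, f k), ← hf, ← sum_range_succ, sum_range_succ',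
      add_comm]
  have raise := shift (fun k => c k * asc q a b (k + 1) x) (by simp only [hc N le_rfl, zero_mul])
  have lower :=
    shift (fun k => (1 - b * q ^ k) * qInt q (k + 1) * c (k + 1) * asc q a b k x)
    (by simp only [hc (N + 1) N.le_succ, mul_zero, zero_mul])
  simp only [zero_add, pow_zero, mul_one, qInt_one] at raise lower
  rw [extend, sum_range_succ', mul_add, expand, mul_left_comm, mul_asc_zero]
  simp only [add_mul, sum_add_distrib]
  linear_combination lower - raise

end Expansion

theorem qHermite_eq_sum_asc (q ρ y : ℝ) :
    ∀ n x, qHermite q n x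
      = ∑ k ∈ range (n + 1), connCoeff q ρ y n k * asc q (ρ * y) (ρ ^ 2) k x
  | 0, x => by simp [qHermite, asc]
  | 1, x => by simp [sum_range_succ, qHermite, asc, connCoeff]
  | n + 2, x => by
    have vanish : ∀ m, ∀ k ≥ m + 1, connCoeff q ρ y m k = 0 :=
      fun m k hk => connCoeff_eq_zero_of_lt q ρ y hk
    rw [qHermite_succ_succ, qHermite_eq_sum_asc q ρ y (n + 1) x,
      qHermite_eq_sum_asc q ρ y n x, mul_sum_asc (vanish (n + 1)),
      ← eventually_constant_sum (fun k hk => by rw [vanish n k hk, zero_mul])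
        (by omega : n + 1 ≤ n + 2 + 1)]
    simp only [sum_range_succ' _ (n + 2), connCoeff_succ_succ_zero, connCoeff_succ_succ_succ,
      sub_mul, add_mul, sum_sub_distrib, sum_add_distrib, mul_add, mul_sum, mul_assoc]
    ring

theorem exists_asc_eq_eval (q a b : ℝ) :
    ∀ n, ∃ P : Polynomial ℝ, ∀ x, asc q a b n x = P.eval x
  | 0 => ⟨1, by simp [asc]⟩
  | 1 => ⟨.X - .C a, by simp [asc]⟩
  | n + 2 => by
    obtain ⟨P₁, h₁⟩ := exists_asc_eq_eval q a b (n + 1)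
    obtain ⟨P₀, h₀⟩ := exists_asc_eq_eval q a b n
    refine ⟨(.X - .C (a * q ^ (n + 1))) * P₁ - .C ((1 - b * q ^ n) * qInt q (n + 1)) * P₀,
      fun x => ?_⟩
    simp [asc_succ_succ, h₁, h₀]

section Integration

variable {μ : Measure ℝ}

theorem integrable_eval_of_integrable_pow (hmom : ∀ n : ℕ, Integrable (fun x => x ^ n) μ)
    (P : Polynomial ℝ) : Integrable (fun x => P.eval x) μ := by
  induction P using Polynomial.induction_on' with
  | add P Q hP hQ =>
    simp only [Polynomial.eval_add]
    exact hP.add hQ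
  | monomial n c => simpa using (hmom n).const_mul c

theorem integrable_asc (hmom : ∀ n : ℕ, Integrable (fun x => x ^ n) μ) (q a b : ℝ)
    (n : ℕ) : Integrable (asc q a b n) μ := by
  obtain ⟨P, hP⟩ := exists_asc_eq_eval q a b n
  rw [funext hP]
  exact integrable_eval_of_integrable_pow hmom P

theorem integral_qHermite_eq_sum (hmom : ∀ n : ℕ, Integrable (fun x => x ^ n) μ)
    (q ρ y : ℝ) (n : ℕ) :
    ∫ x, qHermite q n x ∂μ
      = ∑ k ∈ range (n + 1),
          connCoeff q ρ y n k * ∫ x, asc q (ρ * y) (ρ ^ 2) k x ∂μ := by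
  simp_rw [qHermite_eq_sum_asc q ρ y n]
  rw [integral_finsetSum _ fun k _ => (integrable_asc hmom _ _ _ k).const_mul _]
  simp_rw [integral_const_mul]

end Integration

/-- Theorem 2 (first part): if a probability measure `μ` on `ℝ` with all moments finite
satisfies `∫ H_n(x|q) dμ(x) = ρ^n H_n(y|q)` for all `n ≥ 1`, then with `a = ρ y`,
`b = ρ²`, the Al-Salam–Chihara polynomials satisfy `∫ p_n(x|q,a,b) dμ(x) = 0` for all
`n ≥ 1`. -/
theorem integral_asc_eq_zero (q ρ y : ℝ) (μ : Measure ℝ) [IsProbabilityMeasure μ]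
    (hmom : ∀ n : ℕ, Integrable (fun x => x ^ n) μ)
    (hH : ∀ n : ℕ, 1 ≤ n → ∫ x, qHermite q n x ∂μ = ρ ^ n * qHermite q n y)
    (a b : ℝ) (ha : a = ρ * y) (hb : b = ρ ^ 2)
    (n : ℕ) (hn : 1 ≤ n) :
    ∫ x, asc q a b n x ∂μ = 0 := by
  subst ha hb
  induction n using Nat.strong_induction_on with
  | _ n ih =>
    obtain ⟨m, rfl⟩ := Nat.exists_eq_add_of_le' hn
    have expand := integral_qHermite_eq_sum hmom q ρ y (m + 1)
    rw [hH (m + 1) hn, sum_range_succ, sum_range_succ', sum_eq_zero fun k hk => by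
      rw [ih (k + 1) (by simpa using hk) (by omega), mul_zero]] at expand
    simpa [asc] using expand
end
end

section
/- Let q, ρ, y be real numbers and let μ be a probability measure on ℝ with finite moments of all orders such that ∫ H_n(x|q) dμ(x) = ρ^n·H_n(y|q) for all n ≥ 1. Then, with a = ρ·y and b = ρ², the Al-Salam–Chihara polynomials are orthogonal with respect to μ: ∫ p_k(x|q,a,b)·p_n(x|q,a,b) dμ(x) = 0 for all 0 ≤ k < n. -/
open MeasureTheory Finset

noncomputable section

namespace AscOrthAux

lemma qInt_zero (q : ℝ) : qInt q 0 = 0 := by simp [qInt]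

lemma qInt_one (q : ℝ) : qInt q 1 = 1 := by simp [qInt]

lemma qInt_add (q : ℝ) (i j : ℕ) : qInt q (i + j) = qInt q i + q ^ i * qInt q j := by
  unfold qInt
  rw [Finset.sum_range_add, Finset.mul_sum]
  simp [pow_add]

lemma qHermite_rec (q : ℝ) (n : ℕ) (x : ℝ) :
    qHermite q (n + 2) x = x * qHermite q (n + 1) x - qInt q (n + 1) * qHermite q n x := rfl

lemma x_mul_qHermite (q : ℝ) (m : ℕ) (x : ℝ) :
    x * qHermite q m x = qHermite q (m + 1) x + qInt q m * qHermite q (m - 1) x := by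
  cases m with
  | zero => show x * 1 = x + qInt q 0 * 1; simp [qInt_zero]
  | succ k =>
      show x * qHermite q (k + 1) x = qHermite q (k + 2) x + qInt q (k + 1) * qHermite q k x
      rw [qHermite_rec]; ring

/-- The claimed value of `∫ H_m p_n dμ`. -/
def Fv (q ρ y b : ℝ) (m n : ℕ) : ℝ :=
  if m < n then 0 else
    ρ ^ (m - n) * qHermite q (m - n) y * (∏ j ∈ Finset.range n, qInt q (m - j)) *
      ∏ j ∈ Finset.range n, (1 - b * q ^ j)

lemma prod_qInt_shift (q : ℝ) (M N : ℕ) :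
    ∏ j ∈ Finset.range (N + 1), qInt q (M + 1 - j)
      = qInt q (M + 1) * ∏ j ∈ Finset.range N, qInt q (M - j) := by
  rw [Finset.prod_range_succ']
  rw [Finset.prod_congr rfl (fun j _ => by rw [show M + 1 - (j + 1) = M - j from by omega])]
  simp [mul_comm]

/-- The central algebraic recurrence satisfied by `Fv`. -/
lemma Fv_rec (q ρ y a b : ℝ) (ha : a = ρ * y) (hb : b = ρ ^ 2) (n m : ℕ) :
    Fv q ρ y b (m + 1) (n + 1) + qInt q m * Fv q ρ y b (m - 1) (n + 1)
      - a * q ^ (n + 1) * Fv q ρ y b m (n + 1)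
      - (1 - b * q ^ n) * qInt q (n + 1) * Fv q ρ y b m n
      = Fv q ρ y b m (n + 2) := by
  subst ha hb
  rcases Nat.lt_or_ge m n with h | h
  · rw [Fv, if_pos (by omega), Fv, if_pos (by omega), Fv, if_pos (by omega),
      Fv, if_pos (by omega), Fv, if_pos (by omega)]
    ring
  rcases Nat.lt_or_ge m (n + 1) with h1 | h1
  · -- m = n
    have hm : m = n := by omega
    subst hm
    rw [Fv, if_neg (by omega), Fv, if_pos (by omega), Fv, if_pos (by omega),
      Fv, if_neg (by omega), Fv, if_pos (by omega)]
    rw [show m + 1 - (m + 1) = 0 from by omega, show m - m = 0 from by omega]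
    rw [prod_qInt_shift, Finset.prod_range_succ]
    ring
  rcases Nat.lt_or_ge m (n + 2) with h2 | h2
  · -- m = n + 1
    have hm : m = n + 1 := by omega
    subst hm
    rw [Fv, if_neg (by omega), Fv, if_pos (by omega), Fv, if_neg (by omega),
      Fv, if_neg (by omega), Fv, if_pos (by omega)]
    rw [show n + 1 + 1 - (n + 1) = 1 from by omega, show n + 1 - (n + 1) = 0 from by omega,
      show n + 1 - n = 1 from by omega]
    rw [prod_qInt_shift]
    rw [show (∏ j ∈ Finset.range (n + 1), qInt q (n + 1 - j))
        = (∏ j ∈ Finset.range n, qInt q (n + 1 - j)) * qInt q (n + 1 - n) from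
        Finset.prod_range_succ _ _]
    rw [show n + 1 - n = 1 from by omega, qInt_one]
    rw [show (∏ j ∈ Finset.range (n + 1), (1 - ρ ^ 2 * q ^ j))
        = (∏ j ∈ Finset.range n, (1 - ρ ^ 2 * q ^ j)) * (1 - ρ ^ 2 * q ^ n) from
        Finset.prod_range_succ _ _]
    rw [show n + 1 + 1 = (n + 1) + 1 from rfl, qInt_add q (n + 1) 1, qInt_one]
    rw [show qHermite q 1 y = y from rfl, show qHermite q 0 y = 1 from rfl]
    ring
  · -- m ≥ n + 2
    obtain ⟨r, rfl⟩ := Nat.exists_eq_add_of_le h2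
    rw [Fv, if_neg (by omega), Fv, if_neg (by omega), Fv, if_neg (by omega),
      Fv, if_neg (by omega), Fv, if_neg (by omega)]
    rw [show n + 2 + r - 1 = n + 1 + r from by omega]
    rw [show n + 2 + r + 1 - (n + 1) = r + 2 from by omega,
      show n + 1 + r - (n + 1) = r from by omega,
      show n + 2 + r - (n + 1) = r + 1 from by omega,
      show n + 2 + r - n = r + 2 from by omega,
      show n + 2 + r - (n + 2) = r from by omega]
    -- products
    have hGfull : (∏ j ∈ Finset.range (n + 2), qInt q (n + 2 + r - j))
        = qInt q (n + 2 + r) * ∏ j ∈ Finset.range (n + 1), qInt q (n + 1 + r - j) := by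
      rw [Finset.prod_range_succ',
        Finset.prod_congr rfl (fun j _ => by rw [show n + 2 + r - (j + 1) = n + 1 + r - j from by omega]),
        show n + 2 + r - 0 = n + 2 + r from rfl]
      ring
    have hGfull2 : (∏ j ∈ Finset.range (n + 2), qInt q (n + 2 + r - j))
        = (∏ j ∈ Finset.range n, qInt q (n + 2 + r - j)) * qInt q (r + 2) * qInt q (r + 1) := by
      rw [Finset.prod_range_succ, Finset.prod_range_succ,
        show n + 2 + r - (n + 1) = r + 1 from by omega, show n + 2 + r - n = r + 2 from by omega]
    have key1 : qInt q (n + 2 + r) * (∏ j ∈ Finset.range (n + 1), qInt q (n + 1 + r - j))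
        = (∏ j ∈ Finset.range n, qInt q (n + 2 + r - j)) * qInt q (r + 2) * qInt q (r + 1) := by
      rw [← hGfull, hGfull2]
    have hT4 : (∏ j ∈ Finset.range (n + 1), qInt q (n + 2 + r - j))
        = (∏ j ∈ Finset.range n, qInt q (n + 2 + r - j)) * qInt q (r + 2) := by
      rw [Finset.prod_range_succ, show n + 2 + r - n = r + 2 from by omega]
    have hA2 : (∏ j ∈ Finset.range (n + 2), (1 - ρ ^ 2 * q ^ j))
        = (∏ j ∈ Finset.range n, (1 - ρ ^ 2 * q ^ j)) * (1 - ρ ^ 2 * q ^ n) * (1 - ρ ^ 2 * q ^ (n + 1)) := by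
      rw [Finset.prod_range_succ, Finset.prod_range_succ]
    have hA1 : (∏ j ∈ Finset.range (n + 1), (1 - ρ ^ 2 * q ^ j))
        = (∏ j ∈ Finset.range n, (1 - ρ ^ 2 * q ^ j)) * (1 - ρ ^ 2 * q ^ n) :=
      Finset.prod_range_succ _ _
    rw [prod_qInt_shift q (n + 2 + r) n, hGfull, hT4, hA2, hA1]
    rw [qHermite_rec q r y]
    rw [show n + 2 + r + 1 = n + 1 + (r + 2) from by omega, qInt_add q (n + 1) (r + 2)]
    linear_combination (ρ ^ r * qHermite q r y * (∏ j ∈ Finset.range n, (1 - ρ ^ 2 * q ^ j))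
      * (1 - ρ ^ 2 * q ^ n) * ρ ^ 2 * q ^ (n + 1)) * key1

section Integral

variable {μ : Measure ℝ} [IsProbabilityMeasure μ]

lemma integrable_polyEval (hmom : ∀ n : ℕ, Integrable (fun x => x ^ n) μ)
    (P : Polynomial ℝ) : Integrable (fun x => P.eval x) μ := by
  have h : (fun x => P.eval x) = fun x => ∑ i ∈ Finset.range (P.natDegree + 1), P.coeff i * x ^ i :=
    funext fun x => Polynomial.eval_eq_sum_range x
  rw [h]
  exact integrable_finset_sum _ fun i _ => (hmom i).const_mul _

lemma isPoly_qHermite (q : ℝ) : ∀ n, ∃ P : Polynomial ℝ, ∀ x, qHermite q n x = P.eval x := by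
  intro n
  induction n using Nat.twoStepInduction with
  | zero => exact ⟨1, fun x => by simp [qHermite]⟩
  | one => exact ⟨Polynomial.X, fun x => by simp [qHermite]⟩
  | more n ih1 ih2 =>
      obtain ⟨P, hP⟩ := ih1
      obtain ⟨Q, hQ⟩ := ih2
      exact ⟨Polynomial.X * Q - Polynomial.C (qInt q (n + 1)) * P,
        fun x => by simp [qHermite_rec, hP, hQ]⟩

lemma isPoly_asc (q a b : ℝ) : ∀ n, ∃ P : Polynomial ℝ, ∀ x, asc q a b n x = P.eval x := by
  intro n
  induction n using Nat.twoStepInduction with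
  | zero => exact ⟨1, fun x => by simp [asc]⟩
  | one => exact ⟨Polynomial.X - Polynomial.C a, fun x => by simp [asc]⟩
  | more n ih1 ih2 =>
      obtain ⟨P, hP⟩ := ih1
      obtain ⟨Q, hQ⟩ := ih2
      refine ⟨(Polynomial.X - Polynomial.C (a * q ^ (n + 1))) * Q
        - Polynomial.C ((1 - b * q ^ n) * qInt q (n + 1)) * P, fun x => ?_⟩
      have : asc q a b (n + 2) x = (x - a * q ^ (n + 1)) * asc q a b (n + 1) x
          - (1 - b * q ^ n) * qInt q (n + 1) * asc q a b n x := rfl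
      simp [this, hP, hQ]

lemma integrable_HP (hmom : ∀ n : ℕ, Integrable (fun x => x ^ n) μ) (q a b : ℝ) (m n : ℕ) :
    Integrable (fun x => qHermite q m x * asc q a b n x) μ := by
  obtain ⟨P, hP⟩ := isPoly_qHermite q m
  obtain ⟨Q, hQ⟩ := isPoly_asc q a b n
  have h : (fun x => qHermite q m x * asc q a b n x) = fun x => (P * Q).eval x :=
    funext fun x => by simp [hP, hQ]
  rw [h]
  exact integrable_polyEval hmom _

lemma key (q ρ y a b : ℝ) (ha : a = ρ * y) (hb : b = ρ ^ 2)
    (hmom : ∀ n : ℕ, Integrable (fun x => x ^ n) μ)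
    (hH : ∀ n : ℕ, 1 ≤ n → ∫ x, qHermite q n x ∂μ = ρ ^ n * qHermite q n y) :
    ∀ n m : ℕ, ∫ x, qHermite q m x * asc q a b n x ∂μ = Fv q ρ y b m n := by
  have intH : ∀ j, Integrable (fun x => qHermite q j x) μ := by
    intro j
    obtain ⟨P, hP⟩ := isPoly_qHermite q j
    have h : (fun x => qHermite q j x) = fun x => P.eval x := funext hP
    rw [h]; exact integrable_polyEval hmom _
  have hH0 : ∀ j, ∫ x, qHermite q j x ∂μ = ρ ^ j * qHermite q j y := by
    intro j
    cases j with
    | zero =>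
        have h : (fun x => qHermite q 0 x) = fun _ : ℝ => (1 : ℝ) := rfl
        rw [h, integral_const]
        simp [show qHermite q 0 y = 1 from rfl]
    | succ j => exact hH (j + 1) (by omega)
  intro n
  induction n using Nat.twoStepInduction with
  | zero =>
      intro m
      have h : (fun x => qHermite q m x * asc q a b 0 x) = fun x => qHermite q m x :=
        funext fun x => by
          simp [show asc q a b 0 x = 1 from rfl]
      rw [h, hH0 m]
      simp [Fv]
  | one =>
      intro m
      have h : (fun x => qHermite q m x * asc q a b 1 x)
          = fun x => qHermite q (m + 1) x + qInt q m * qHermite q (m - 1) x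
              - a * qHermite q m x :=
        funext fun x => by
          have hx := x_mul_qHermite q m x
          have h1 : asc q a b 1 x = x - a := rfl
          rw [h1]
          linear_combination hx
      have J1 : Integrable (fun x => qHermite q (m + 1) x + qInt q m * qHermite q (m - 1) x) μ :=
        (intH _).add ((intH _).const_mul _)
      have J2 : Integrable (fun x => a * qHermite q m x) μ := (intH _).const_mul _
      rw [h, integral_sub J1 J2,
        integral_add (intH _) ((intH _).const_mul _), integral_const_mul, integral_const_mul,
        hH0, hH0, hH0]
      cases m with
      | zero =>
          rw [Fv, if_pos (by omega)]
          simp only [qInt_zero, show qHermite q 1 y = y from rfl,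
            show qHermite q 0 y = 1 from rfl]
          subst ha; ring
      | succ k =>
          rw [Fv, if_neg (by omega)]
          simp only [show k + 1 - 1 = k from rfl, Finset.prod_range_one,
            show k + 1 - 0 = k + 1 from rfl, pow_zero,
            qHermite_rec q k y]
          subst ha hb; ring
  | more n ih1 ih2 =>
      intro m
      have h : (fun x => qHermite q m x * asc q a b (n + 2) x)
          = fun x => qHermite q (m + 1) x * asc q a b (n + 1) x
              + qInt q m * (qHermite q (m - 1) x * asc q a b (n + 1) x)
              - a * q ^ (n + 1) * (qHermite q m x * asc q a b (n + 1) x)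
              - (1 - b * q ^ n) * qInt q (n + 1) * (qHermite q m x * asc q a b n x) :=
        funext fun x => by
          have hx := x_mul_qHermite q m x
          have h2 : asc q a b (n + 2) x = (x - a * q ^ (n + 1)) * asc q a b (n + 1) x
              - (1 - b * q ^ n) * qInt q (n + 1) * asc q a b n x := rfl
          rw [h2]
          linear_combination asc q a b (n + 1) x * hx
      have I1 := integrable_HP (μ := μ) hmom q a b (m + 1) (n + 1)
      have I2 := (integrable_HP (μ := μ) hmom q a b (m - 1) (n + 1)).const_mul (qInt q m)
      have I3 := (integrable_HP (μ := μ) hmom q a b m (n + 1)).const_mul (a * q ^ (n + 1))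
      have I4 := (integrable_HP (μ := μ) hmom q a b m n).const_mul
        ((1 - b * q ^ n) * qInt q (n + 1))
      have I12 : Integrable (fun x => qHermite q (m + 1) x * asc q a b (n + 1) x
          + qInt q m * (qHermite q (m - 1) x * asc q a b (n + 1) x)) μ := I1.add I2
      have I123 : Integrable (fun x => qHermite q (m + 1) x * asc q a b (n + 1) x
          + qInt q m * (qHermite q (m - 1) x * asc q a b (n + 1) x)
          - a * q ^ (n + 1) * (qHermite q m x * asc q a b (n + 1) x)) μ := I12.sub I3
      rw [h, integral_sub I123 I4, integral_sub I12 I3,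
        integral_add I1 I2, integral_const_mul, integral_const_mul, integral_const_mul,
        ih2 (m + 1), ih2 (m - 1), ih2 m, ih1 m]
      exact Fv_rec q ρ y a b ha hb n m

end Integral

/-- Span of the first `j+1` q-Hermite polynomials. -/
def Vspan (q : ℝ) (j : ℕ) : Submodule ℝ (ℝ → ℝ) :=
  Submodule.span ℝ {f | ∃ m ≤ j, f = qHermite q m}

lemma Vspan_mono (q : ℝ) {j j' : ℕ} (h : j ≤ j') : Vspan q j ≤ Vspan q j' :=
  Submodule.span_mono (fun f hf => by
    obtain ⟨m, hm, rfl⟩ := hf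
    exact ⟨m, le_trans hm h, rfl⟩)

lemma mem_mulX (q : ℝ) (j : ℕ) {f : ℝ → ℝ} (hf : f ∈ Vspan q j) :
    (fun x => x * f x) ∈ Vspan q (j + 1) := by
  induction hf using Submodule.span_induction with
  | mem g hg =>
      obtain ⟨m, hm, rfl⟩ := hg
      have h : (fun x => x * qHermite q m x)
          = qHermite q (m + 1) + qInt q m • qHermite q (m - 1) := by
        funext x
        simp only [Pi.add_apply, Pi.smul_apply, smul_eq_mul]
        exact x_mul_qHermite q m x
      rw [h]
      exact add_mem (Submodule.subset_span ⟨m + 1, by omega, rfl⟩)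
        (Submodule.smul_mem _ _ (Submodule.subset_span ⟨m - 1, by omega, rfl⟩))
  | zero =>
      have h : (fun x : ℝ => x * (0 : ℝ → ℝ) x) = (0 : ℝ → ℝ) := by
        funext x; simp
      rw [h]; exact zero_mem _
  | add g h' _ _ ihg ihh =>
      have he : (fun x => x * (g + h') x) = (fun x => x * g x) + fun x => x * h' x := by
        funext x; simp [Pi.add_apply]; ring
      rw [he]; exact add_mem ihg ihh
  | smul c g _ ihg =>
      have he : (fun x => x * (c • g) x) = c • fun x => x * g x := by
        funext x; simp [Pi.smul_apply, smul_eq_mul]; ring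
      rw [he]; exact Submodule.smul_mem _ _ ihg

lemma asc_mem (q a b : ℝ) : ∀ k, asc q a b k ∈ Vspan q k := by
  intro k
  induction k using Nat.twoStepInduction with
  | zero =>
      have h : asc q a b 0 = qHermite q 0 := rfl
      rw [h]; exact Submodule.subset_span ⟨0, le_refl 0, rfl⟩
  | one =>
      have h : asc q a b 1 = qHermite q 1 - a • qHermite q 0 := by
        funext x
        show x - a = x - a * 1
        ring
      rw [h]
      exact sub_mem (Submodule.subset_span ⟨1, le_refl 1, rfl⟩)
        (Submodule.smul_mem _ _ (Submodule.subset_span ⟨0, by omega, rfl⟩))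
  | more k ih0 ih1 =>
      have h : asc q a b (k + 2) = (fun x => x * asc q a b (k + 1) x)
          - (a * q ^ (k + 1)) • asc q a b (k + 1)
          - ((1 - b * q ^ k) * qInt q (k + 1)) • asc q a b k := by
        funext x
        have h2 : asc q a b (k + 2) x = (x - a * q ^ (k + 1)) * asc q a b (k + 1) x
            - (1 - b * q ^ k) * qInt q (k + 1) * asc q a b k x := rfl
        simp only [Pi.sub_apply, Pi.smul_apply, smul_eq_mul, h2]
        ring
      rw [h]
      exact sub_mem (sub_mem (mem_mulX q (k + 1) ih1)
          (Submodule.smul_mem _ _ (Vspan_mono q (by omega) ih1)))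
        (Submodule.smul_mem _ _ (Vspan_mono q (by omega) ih0))

end AscOrthAux

open AscOrthAux in
/-- Theorem 2: if a probability measure `μ` on `ℝ` with all moments finite satisfies
`∫ H_n(x|q) dμ(x) = ρ^n H_n(y|q)` for all `n ≥ 1`, then with `a = ρ y`, `b = ρ²`, the
Al-Salam–Chihara polynomials are orthogonal with respect to `μ`:
`∫ p_k p_n dμ = 0` for all `0 ≤ k < n`. -/
theorem asc_orthogonal (q ρ y : ℝ) (μ : Measure ℝ) [IsProbabilityMeasure μ]
    (hmom : ∀ n : ℕ, Integrable (fun x => x ^ n) μ)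
    (hH : ∀ n : ℕ, 1 ≤ n → ∫ x, qHermite q n x ∂μ = ρ ^ n * qHermite q n y)
    (a b : ℝ) (ha : a = ρ * y) (hb : b = ρ ^ 2)
    (k n : ℕ) (hkn : k < n) :
    ∫ x, asc q a b k x * asc q a b n x ∂μ = 0 := by
  have hmem := asc_mem q a b k
  have main : ∀ f : ℝ → ℝ, f ∈ Vspan q k →
      Integrable (fun x => f x * asc q a b n x) μ ∧
        ∫ x, f x * asc q a b n x ∂μ = 0 := by
    intro f hf
    induction hf using Submodule.span_induction with
    | mem g hg =>
        obtain ⟨m, hm, rfl⟩ := hg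
        refine ⟨integrable_HP hmom q a b m n, ?_⟩
        rw [key q ρ y a b ha hb hmom hH n m, Fv, if_pos (by omega)]
    | zero =>
        have h : (fun x : ℝ => (0 : ℝ → ℝ) x * asc q a b n x) = fun _ => (0 : ℝ) := by
          funext x; simp
        rw [h]
        exact ⟨integrable_const 0, by simp⟩
    | add g h' _ _ ihg ihh =>
        have he : (fun x => (g + h') x * asc q a b n x)
            = fun x => g x * asc q a b n x + h' x * asc q a b n x := by
          funext x; simp [Pi.add_apply]; ring
        rw [he]
        exact ⟨ihg.1.add ihh.1, by rw [integral_add ihg.1 ihh.1, ihg.2, ihh.2]; ring⟩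
    | smul c g _ ihg =>
        have he : (fun x => (c • g) x * asc q a b n x)
            = fun x => c * (g x * asc q a b n x) := by
          funext x; simp [Pi.smul_apply, smul_eq_mul]; ring
        rw [he]
        exact ⟨ihg.1.const_mul c, by rw [integral_const_mul, ihg.2, mul_zero]⟩
  exact (main _ hmem).2
end
end

section
/- Fix real numbers x and q, and for n ≥ 1 let M_n(x|q) = [ H_{i+j}(x|q) ]_{i,j=0,…,n−1} be the n×n Hankel matrix whose (i,j) entry is the q-Hermite polynomial H_{i+j}(x|q). Then for every n ≥ 1, det M_{n+1}(x|q) = (−1)^n · q^{n(n−1)/2} · [n]_q! · det M_n(x|q); in particular the ratio det M_{n+1}/det M_n does not depend on x. -/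
open MeasureTheory Finset

noncomputable section

/-- The `q`-factorial `[n]_q! = [1]_q [2]_q ⋯ [n]_q`, with `[0]_q! = 1`. -/
def qFact (q : ℝ) (n : ℕ) : ℝ := ∏ i ∈ Finset.range n, qInt q (i + 1)

namespace HankelQH

/-- Gaussian binomial coefficient. -/
def qBin (q : ℝ) : ℕ → ℕ → ℝ
  | _, 0 => 1
  | 0, _ + 1 => 0
  | n + 1, k + 1 => qBin q n k + q ^ (k + 1) * qBin q n (k + 1)

/-- diagonal coefficients. -/
def cc (q : ℝ) (k : ℕ) : ℝ := (-1) ^ k * q ^ (k * (k - 1) / 2) * qFact q k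

variable (x q : ℝ)

lemma qInt_zero : qInt q 0 = 0 := by simp [qInt]

lemma qInt_one : qInt q 1 = 1 := by simp [qInt]

lemma qInt_add (a b : ℕ) : qInt q (a + b) = qInt q a + q ^ a * qInt q b := by
  simp [qInt, Finset.sum_range_add, Finset.mul_sum, pow_add]

lemma Hrec (t : ℕ) :
    qHermite q (t + 1) x = x * qHermite q t x - qInt q t * qHermite q (t - 1) x := by
  cases t with
  | zero => simp [qHermite, qInt_zero]
  | succ t => rfl

lemma qBin_zero (n : ℕ) : qBin q n 0 = 1 := by cases n <;> rfl

lemma qBin_eq_zero : ∀ n k, n < k → qBin q n k = 0 := by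
  intro n
  induction n with
  | zero =>
    intro k h
    match k, h with
    | k + 1, _ => rfl
  | succ n ih =>
    intro k h
    match k, h with
    | k + 1, h =>
      show qBin q n k + q ^ (k + 1) * qBin q n (k + 1) = 0
      rw [ih k (by omega), ih (k + 1) (by omega)]; ring

lemma qBin_diag : ∀ n, qBin q n n = 1 := by
  intro n
  induction n with
  | zero => rfl
  | succ n ih =>
    show qBin q n n + q ^ (n + 1) * qBin q n (n + 1) = 1
    rw [ih, qBin_eq_zero q n (n + 1) (by omega)]; ring

lemma qBin_one (n : ℕ) : qBin q n 1 = qInt q n := by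
  induction n with
  | zero => simp [qBin, qInt_zero]
  | succ n ih =>
    show qBin q n 0 + q ^ 1 * qBin q n 1 = qInt q (n + 1)
    rw [qBin_zero, ih, show n + 1 = 1 + n by omega, qInt_add, qInt_one]

lemma one_sub_pow (t : ℕ) : 1 - q ^ t = (1 - q) * qInt q t := by
  have h := geom_sum_mul q t
  rw [qInt]
  linear_combination h

lemma qInt_split (a b c : ℕ) (h : a + b = c) :
    qInt q c = qInt q a + q ^ a * qInt q b := by
  subst h; exact qInt_add q a b

lemma qBin_pascal2 : ∀ n k, qBin q (n + 1) (k + 1) = q ^ (n - k) * qBin q n k + qBin q n (k + 1) := by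
  intro n
  induction n with
  | zero =>
    intro k
    match k with
    | 0 => simp [qBin]
    | k + 1 =>
      show qBin q 0 (k + 1) + q ^ (k + 2) * qBin q 0 (k + 2) = _
      rw [qBin_eq_zero q 0 (k + 1) (by omega), qBin_eq_zero q 0 (k + 2) (by omega)]
      ring
  | succ n ih =>
    intro k
    match k with
    | 0 =>
      show qBin q (n + 1) 0 + q ^ 1 * qBin q (n + 1) 1 = _
      rw [qBin_zero, qBin_one, Nat.sub_zero]
      linear_combination one_sub_pow q (n + 1)
    | j + 1 =>
      calc qBin q (n + 2) (j + 2)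
          = qBin q (n + 1) (j + 1) + q ^ (j + 2) * qBin q (n + 1) (j + 2) := rfl
        _ = (q ^ (n - j) * qBin q n j + qBin q n (j + 1)) +
              q ^ (j + 2) * (q ^ (n - (j + 1)) * qBin q n (j + 1) + qBin q n (j + 2)) := by
            rw [ih j, ih (j + 1)]
        _ = q ^ (n - j) * (qBin q n j + q ^ (j + 1) * qBin q n (j + 1)) +
              (qBin q n (j + 1) + q ^ (j + 2) * qBin q n (j + 2)) := by
            rcases le_or_gt (j + 1) n with hj | hj
            · have e1 : q ^ (j + 2) * q ^ (n - (j + 1)) = q ^ (n - j) * q ^ (j + 1) := by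
                rw [← pow_add, ← pow_add]; congr 1; omega
              linear_combination qBin q n (j + 1) * e1
            · rw [qBin_eq_zero q n (j + 1) (by omega)]; ring
        _ = q ^ (n + 1 - (j + 1)) * qBin q (n + 1) (j + 1) + qBin q (n + 1) (j + 2) := by
            rw [show n + 1 - (j + 1) = n - j by omega]; rfl

lemma qBin_qInt : ∀ b k, qInt q (k + 1) * qBin q b (k + 1) = qInt q (b - k) * qBin q b k := by
  intro b
  induction b with
  | zero =>
    intro k
    rw [qBin_eq_zero q 0 (k + 1) (by omega), show (0 : ℕ) - k = 0 by omega, qInt_zero]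
    ring
  | succ b ih =>
    have I3 : ∀ k, qInt q (b + 1 - k) * qBin q (b + 1) k = qInt q (b + 1) * qBin q b k := by
      intro k
      match k with
      | 0 => rw [qBin_zero, qBin_zero, Nat.sub_zero]
      | j + 1 =>
        show qInt q (b + 1 - (j + 1)) * (qBin q b j + q ^ (j + 1) * qBin q b (j + 1)) = _
        rw [show b + 1 - (j + 1) = b - j by omega]
        have h1 : qInt q (b - j) * qBin q b j = qInt q (j + 1) * qBin q b (j + 1) := (ih j).symm
        rcases le_or_gt j b with hj | hj
        · have hq := qInt_split q (j + 1) (b - j) (b + 1) (by omega)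
          linear_combination h1 - qBin q b (j + 1) * hq
        · rw [qBin_eq_zero q b (j + 1) (by omega), qBin_eq_zero q b j (by omega)]
          ring
    intro k
    show qInt q (k + 1) * (qBin q b k + q ^ (k + 1) * qBin q b (k + 1)) = _
    rw [I3 k]
    rcases le_or_gt k b with hk | hk
    · have hq := qInt_split q (k + 1) (b - k) (b + 1) (by omega)
      linear_combination q ^ (k + 1) * (ih k) - qBin q b k * hq
    · rw [qBin_eq_zero q b k (by omega), qBin_eq_zero q b (k + 1) (by omega)]
      ring

lemma qBin_qInt' (a k : ℕ) :
    qInt q (a + 1 - k) * qBin q (a + 1) k = qInt q (a + 1) * qBin q a k := by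
  match k with
  | 0 => rw [qBin_zero, qBin_zero, Nat.sub_zero]
  | j + 1 =>
    show qInt q (a + 1 - (j + 1)) * (qBin q a j + q ^ (j + 1) * qBin q a (j + 1)) = _
    rw [show a + 1 - (j + 1) = a - j by omega]
    have h1 : qInt q (a - j) * qBin q a j = qInt q (j + 1) * qBin q a (j + 1) :=
      (qBin_qInt q a j).symm
    rcases le_or_gt j a with hj | hj
    · have hq := qInt_split q (j + 1) (a - j) (a + 1) (by omega)
      linear_combination h1 - qBin q a (j + 1) * hq
    · rw [qBin_eq_zero q a (j + 1) (by omega), qBin_eq_zero q a j (by omega)]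
      ring

lemma cc_zero : cc q 0 = 1 := by simp [cc, qFact]

lemma cc_one : cc q 1 = -1 := by
  simp [cc, qFact, qInt_one]

lemma cc_succ (k : ℕ) : cc q (k + 1) = -(q ^ k * qInt q (k + 1)) * cc q k := by
  have he : (k + 1) * (k + 1 - 1) / 2 = k * (k - 1) / 2 + k := by
    have h1 : (k + 1).choose 2 = k.choose 1 + k.choose 2 := Nat.choose_succ_succ k 1
    have h2 : (k + 1).choose 2 = (k + 1) * (k + 1 - 1) / 2 := Nat.choose_two_right (k + 1)
    have h3 : k.choose 2 = k * (k - 1) / 2 := Nat.choose_two_right k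
    have h4 : k.choose 1 = k := Nat.choose_one_right k
    omega
  rw [cc, cc, he, qFact, Finset.prod_range_succ, pow_add]
  rw [← qFact]
  ring

def tf (x q : ℝ) (a b k : ℕ) : ℝ :=
  cc q k * qBin q a k * qBin q b k * qHermite q (a - k) x * qHermite q (b - k) x

def W (x q : ℝ) (K a b : ℕ) : ℝ := ∑ k ∈ Finset.range K, tf x q a b k

lemma tf_symm (a b k : ℕ) : tf x q a b k = tf x q b a k := by unfold tf; ring

lemma tf_zero (a b k : ℕ) (h : a < k) : tf x q a b k = 0 := by
  unfold tf; rw [qBin_eq_zero q a k h]; ring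

lemma W_symm (K a b : ℕ) : W x q K a b = W x q K b a :=
  Finset.sum_congr rfl fun k _ => tf_symm x q a b k

lemma step (a b N : ℕ) (hab : a + b + 1 ≤ N) :
    W x q (N + 1) (a + 1) b =
      x * W x q (N + 1) a b
        - (∑ k ∈ Finset.range (N + 1), qInt q (a - k) * cc q k * qBin q a k * qBin q b k *
            qHermite q (a - (k + 1)) x * qHermite q (b - k) x)
        - q ^ a * (∑ k ∈ Finset.range (N + 1), qInt q (b - k) * cc q k * qBin q a k * qBin q b k *
            qHermite q (a - k) x * qHermite q (b - (k + 1)) x) := by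
  have h1 : W x q (N + 1) (a + 1) b
      = (∑ k ∈ Finset.range (N + 1),
           cc q k * qBin q a k * qBin q b k * qHermite q (a + 1 - k) x * qHermite q (b - k) x)
        + (∑ j ∈ Finset.range N,
           q ^ (a - j) * cc q (j + 1) * qBin q a j * qBin q b (j + 1) *
             qHermite q (a - j) x * qHermite q (b - (j + 1)) x) := by
    simp only [W]
    rw [Finset.sum_range_succ' (fun k => tf x q (a + 1) b k) N]
    rw [Finset.sum_range_succ' (fun k => cc q k * qBin q a k * qBin q b k *
          qHermite q (a + 1 - k) x * qHermite q (b - k) x) N]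
    have h0 : tf x q (a + 1) b 0
        = cc q 0 * qBin q a 0 * qBin q b 0 * qHermite q (a + 1 - 0) x * qHermite q (b - 0) x := by
      unfold tf; rw [qBin_zero, qBin_zero, qBin_zero]
    have hj : ∀ j ∈ Finset.range N, tf x q (a + 1) b (j + 1)
        = cc q (j + 1) * qBin q a (j + 1) * qBin q b (j + 1) *
            qHermite q (a + 1 - (j + 1)) x * qHermite q (b - (j + 1)) x
          + q ^ (a - j) * cc q (j + 1) * qBin q a j * qBin q b (j + 1) *
            qHermite q (a - j) x * qHermite q (b - (j + 1)) x := by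
      intro j _
      unfold tf
      rw [qBin_pascal2 q a j, show a + 1 - (j + 1) = a - j by omega]
      ring
    rw [h0, Finset.sum_congr rfl hj, Finset.sum_add_distrib]
    ring
  have h2 : (∑ k ∈ Finset.range (N + 1),
        cc q k * qBin q a k * qBin q b k * qHermite q (a + 1 - k) x * qHermite q (b - k) x)
      = x * W x q (N + 1) a b
        - ∑ k ∈ Finset.range (N + 1), qInt q (a - k) * cc q k * qBin q a k * qBin q b k *
            qHermite q (a - (k + 1)) x * qHermite q (b - k) x := by
    have hp : ∀ k ∈ Finset.range (N + 1),
        cc q k * qBin q a k * qBin q b k * qHermite q (a + 1 - k) x * qHermite q (b - k) x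
          = x * tf x q a b k - qInt q (a - k) * cc q k * qBin q a k * qBin q b k *
              qHermite q (a - (k + 1)) x * qHermite q (b - k) x := by
      intro k _
      rcases le_or_gt k a with hk | hk
      · rw [show a + 1 - k = (a - k) + 1 by omega, Hrec x q (a - k),
          show a - k - 1 = a - (k + 1) by omega]
        unfold tf
        ring
      · unfold tf
        rw [qBin_eq_zero q a k hk]
        ring
    rw [Finset.sum_congr rfl hp, Finset.sum_sub_distrib, ← Finset.mul_sum, ← W]
  have h3 : (∑ j ∈ Finset.range N,
        q ^ (a - j) * cc q (j + 1) * qBin q a j * qBin q b (j + 1) *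
          qHermite q (a - j) x * qHermite q (b - (j + 1)) x)
      = - (q ^ a * ∑ k ∈ Finset.range (N + 1), qInt q (b - k) * cc q k * qBin q a k * qBin q b k *
            qHermite q (a - k) x * qHermite q (b - (k + 1)) x) := by
    have hq : ∀ j ∈ Finset.range N,
        q ^ (a - j) * cc q (j + 1) * qBin q a j * qBin q b (j + 1) *
          qHermite q (a - j) x * qHermite q (b - (j + 1)) x
        = -(q ^ a * (qInt q (b - j) * cc q j * qBin q a j * qBin q b j *
            qHermite q (a - j) x * qHermite q (b - (j + 1)) x)) := by
      intro j _
      rw [cc_succ q j]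
      rcases le_or_gt j a with hj | hj
      · have epow : q ^ (a - j) * q ^ j = q ^ a := by
          rw [← pow_add]; congr 1; omega
        have hbq := qBin_qInt q b j
        linear_combination (-(q ^ a * cc q j * qBin q a j * qHermite q (a - j) x *
              qHermite q (b - (j + 1)) x)) * hbq
          - (qInt q (j + 1) * cc q j * qBin q a j * qBin q b (j + 1) *
              qHermite q (a - j) x * qHermite q (b - (j + 1)) x) * epow
      · rw [qBin_eq_zero q a j hj]
        ring
    rw [Finset.sum_congr rfl hq]
    rw [Finset.sum_range_succ (fun k => qInt q (b - k) * cc q k * qBin q a k * qBin q b k *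
          qHermite q (a - k) x * qHermite q (b - (k + 1)) x) N]
    rw [qBin_eq_zero q a N (by omega)]
    rw [show qInt q (b - N) * cc q N * (0:ℝ) * qBin q b N * qHermite q (a - N) x *
          qHermite q (b - (N + 1)) x = 0 by ring, add_zero, Finset.mul_sum,
      ← Finset.sum_neg_distrib]
  rw [h1, h2, h3]
  ring

lemma Drec (m n N : ℕ) (h : m + n + 3 ≤ N) :
    W x q (N + 1) (m + 2) (n + 1) - W x q (N + 1) (m + 1) (n + 2)
      = (1 - q) * qInt q (m + 1) * qInt q (n + 1) *
          (W x q (N + 1) (m + 1) n - W x q (N + 1) m (n + 1)) := by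
  have h1 := step x q (m + 1) (n + 1) N (by omega)
  have h2 := step x q (n + 1) (m + 1) N (by omega)
  have hA1 : (∑ k ∈ Finset.range (N + 1), qInt q (m + 1 - k) * cc q k * qBin q (m + 1) k *
        qBin q (n + 1) k * qHermite q (m + 1 - (k + 1)) x * qHermite q (n + 1 - k) x)
      = qInt q (m + 1) * W x q (N + 1) m (n + 1) := by
    rw [W, Finset.mul_sum]
    refine Finset.sum_congr rfl fun k _ => ?_
    rw [show m + 1 - (k + 1) = m - k by omega]
    unfold tf
    linear_combination (cc q k * qBin q (n + 1) k * qHermite q (m - k) x *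
      qHermite q (n + 1 - k) x) * qBin_qInt' q m k
  have hA2 : (∑ k ∈ Finset.range (N + 1), qInt q (n + 1 - k) * cc q k * qBin q (m + 1) k *
        qBin q (n + 1) k * qHermite q (m + 1 - k) x * qHermite q (n + 1 - (k + 1)) x)
      = qInt q (n + 1) * W x q (N + 1) (m + 1) n := by
    rw [W, Finset.mul_sum]
    refine Finset.sum_congr rfl fun k _ => ?_
    rw [show n + 1 - (k + 1) = n - k by omega]
    unfold tf
    linear_combination (cc q k * qBin q (m + 1) k * qHermite q (m + 1 - k) x *
      qHermite q (n - k) x) * qBin_qInt' q n k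
  have hB1 : (∑ k ∈ Finset.range (N + 1), qInt q (n + 1 - k) * cc q k * qBin q (n + 1) k *
        qBin q (m + 1) k * qHermite q (n + 1 - (k + 1)) x * qHermite q (m + 1 - k) x)
      = qInt q (n + 1) * W x q (N + 1) (m + 1) n := by
    rw [W, Finset.mul_sum]
    refine Finset.sum_congr rfl fun k _ => ?_
    rw [show n + 1 - (k + 1) = n - k by omega]
    unfold tf
    linear_combination (cc q k * qBin q (m + 1) k * qHermite q (m + 1 - k) x *
      qHermite q (n - k) x) * qBin_qInt' q n k
  have hB2 : (∑ k ∈ Finset.range (N + 1), qInt q (m + 1 - k) * cc q k * qBin q (n + 1) k *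
        qBin q (m + 1) k * qHermite q (n + 1 - k) x * qHermite q (m + 1 - (k + 1)) x)
      = qInt q (m + 1) * W x q (N + 1) m (n + 1) := by
    rw [W, Finset.mul_sum]
    refine Finset.sum_congr rfl fun k _ => ?_
    rw [show m + 1 - (k + 1) = m - k by omega]
    unfold tf
    linear_combination (cc q k * qBin q (n + 1) k * qHermite q (m - k) x *
      qHermite q (n + 1 - k) x) * qBin_qInt' q m k
  rw [hA1, hA2] at h1
  rw [hB1, hB2, W_symm x q (N + 1) (n + 1) (m + 1)] at h2
  rw [W_symm x q (N + 1) (m + 1) (n + 2)]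
  have p := one_sub_pow q (m + 1)
  have r := one_sub_pow q (n + 1)
  linear_combination h1 - h2 + (qInt q (n + 1) * W x q (N + 1) (m + 1) n) * p
    - (qInt q (m + 1) * W x q (N + 1) m (n + 1)) * r

lemma H0 : qHermite q 0 x = 1 := rfl

lemma H1 : qHermite q 1 x = x := rfl

lemma W_zero (t N : ℕ) : W x q (N + 1) 0 t = qHermite q t x := by
  rw [W, Finset.sum_eq_single 0 (fun k _ hk => tf_zero x q 0 t k (by omega))
    (fun h => absurd (Finset.mem_range.2 (by omega)) h)]
  simp [tf, cc_zero, qBin_zero, H0]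

lemma W_one (t N : ℕ) (ht : t + 1 ≤ N) : W x q (N + 1) 1 t = qHermite q (t + 1) x := by
  obtain ⟨N', rfl⟩ : ∃ N', N = N' + 1 := ⟨N - 1, by omega⟩
  rw [W, Finset.sum_range_succ' (fun k => tf x q 1 t k) (N' + 1),
    Finset.sum_range_succ' (fun j => tf x q 1 t (j + 1)) N']
  rw [Finset.sum_eq_zero fun i _ => tf_zero x q 1 t (i + 1 + 1) (by omega)]
  have f1 : tf x q 1 t 1 = -(qInt q t * qHermite q (t - 1) x) := by
    unfold tf
    rw [cc_one, qBin_diag, qBin_one, H0]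
    ring
  have f0 : tf x q 1 t 0 = x * qHermite q t x := by
    unfold tf
    rw [cc_zero, qBin_zero, qBin_zero, Nat.sub_zero, Nat.sub_zero, H1]
    ring
  rw [f1, f0, Hrec x q t]
  ring

lemma shift : ∀ m n N, m + n + 2 ≤ N → W x q (N + 1) (m + 1) n = W x q (N + 1) m (n + 1) := by
  intro m
  induction m with
  | zero =>
    intro n N h
    rw [W_one x q n N (by omega), W_zero]
  | succ m ih =>
    intro n N h
    match n with
    | 0 =>
      rw [W_symm x q (N + 1) (m + 2) 0, W_symm x q (N + 1) (m + 1) 1, W_zero,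
        W_one x q (m + 1) N (by omega)]
    | j + 1 =>
      have hd := Drec x q m j N (by omega)
      rw [ih j N (by omega)] at hd
      linear_combination hd

lemma lin : ∀ m n N, m + n + 1 ≤ N → W x q (N + 1) m n = qHermite q (m + n) x := by
  intro m
  induction m with
  | zero =>
    intro n N h
    rw [W_zero, Nat.zero_add]
  | succ m ih =>
    intro n N h
    rw [shift x q m n N (by omega), ih (n + 1) N (by omega),
      show m + (n + 1) = m + 1 + n by omega]

lemma W_entry (i j n : ℕ) (hi : i ≤ n) (hj : j ≤ n) :
    qHermite q (i + j) x = ∑ k ∈ Finset.range (n + 1), tf x q i j k := by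
  have hl := lin x q i j (2 * n + 1) (by omega)
  rw [← hl, W]
  exact (Finset.sum_subset (Finset.range_subset_range.2 (by omega))
    (fun k _ hk => tf_zero x q i j k (by simp only [Finset.mem_range, not_lt] at hk; omega))).symm

lemma det_eq (N : ℕ) :
    (Matrix.of fun i j : Fin N => qHermite q ((i : ℕ) + (j : ℕ)) x).det
      = ∏ k ∈ Finset.range N, cc q k := by
  match N with
  | 0 => simp
  | n + 1 =>
    set A : Matrix (Fin (n + 1)) (Fin (n + 1)) ℝ :=
      Matrix.of fun i k => qBin q (i : ℕ) (k : ℕ) * qHermite q ((i : ℕ) - (k : ℕ)) x with hA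
    have hM : (Matrix.of fun i j : Fin (n + 1) => qHermite q ((i : ℕ) + (j : ℕ)) x)
        = A * (Matrix.diagonal fun k : Fin (n + 1) => cc q (k : ℕ)) * A.transpose := by
      ext i j
      rw [Matrix.mul_assoc, Matrix.mul_apply]
      simp only [Matrix.diagonal_mul, Matrix.transpose_apply, Matrix.of_apply, hA]
      rw [W_entry x q i j n (by omega) (by omega)]
      rw [← Fin.sum_univ_eq_sum_range (fun k => tf x q (i : ℕ) (j : ℕ) k) (n + 1)]
      refine Finset.sum_congr rfl fun k _ => ?_
      unfold tf
      ring
    rw [hM, Matrix.det_mul, Matrix.det_mul, Matrix.det_transpose]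
    have hdA : A.det = 1 := by
      have htri : A.BlockTriangular OrderDual.toDual := by
        intro i j hij
        have hij' : (i : ℕ) < (j : ℕ) := hij
        simp only [hA, Matrix.of_apply]
        rw [qBin_eq_zero q _ _ hij']
        ring
      rw [Matrix.det_of_lowerTriangular A htri]
      have hd : ∀ i : Fin (n + 1), A i i = 1 := by
        intro i
        simp only [hA, Matrix.of_apply]
        rw [qBin_diag, Nat.sub_self, H0]
        ring
      rw [Finset.prod_congr rfl fun i _ => hd i]
      simp
    rw [hdA, Matrix.det_diagonal, ← Fin.prod_univ_eq_prod_range (fun k => cc q k) (n + 1)]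
    ring

end HankelQH

/-- Theorem 6: for the Hankel matrices `M_n(x|q) = [H_{i+j}(x|q)]_{i,j=0,…,n-1}` of
`q`-Hermite polynomials, `det M_{n+1} = (-1)^n q^{n(n-1)/2} [n]_q! det M_n` for every
`n ≥ 1`; in particular the ratio does not depend on `x`. -/


theorem hankel_det_qHermite (x q : ℝ) (n : ℕ) (hn : 1 ≤ n) :
    (Matrix.of fun i j : Fin (n + 1) => qHermite q ((i : ℕ) + (j : ℕ)) x).det =
      (-1) ^ n * q ^ (n * (n - 1) / 2) * qFact q n *
        (Matrix.of fun i j : Fin n => qHermite q ((i : ℕ) + (j : ℕ)) x).det := by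
  rw [HankelQH.det_eq, HankelQH.det_eq, Finset.prod_range_succ, HankelQH.cc]
  ring
end
end

section
/- Let q be a real number with |q| < 1. Then there exists a constant C > 0 (depending only on q) such that for every n ≥ 0 and every real x with x² ≤ 4/(1−q), |H_n(x|q)| ≤ C·(n+1)·(1−q)^{−n/2}. -/
open MeasureTheory Finset

noncomputable section

/-!
Rescaling `x = 2c / √(1-q)` turns the recurrence into `p_{n+2} = 2c p_{n+1} - (1 - q^{n+1}) p_n`,
a perturbation of the Chebyshev recurrence of the second kind, and the bound becomes
`|p_n(c)| ≤ C (n+1)` for `|c| ≤ 1`. Write `c = Re z` with `|z| = 1`. Without perturbation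
`p_{n+1} - z p_n = z̄^{n+1}` has modulus one, so `p_n` grows at most linearly. With it, the error
`f_n = p_{n+1} - z p_n` satisfies `f_{n+1} = z̄ f_n + q^{n+1} p_n`; the two coupled inequalities
`|f_{n+1}| ≤ |f_n| + |q|^{n+1} |p_n|` and `|p_{n+1}| ≤ |p_n| + |f_n|` close with the linear-growth
ansatz up to the factor `∏ (1 + (k+1)|q|^{k+1}) ≤ exp (|q| / (1-|q|)^2)`.
-/

open Real

/-- For `a = 0` these are the Chebyshev polynomials of the second kind, `U_n(c)`. -/
def perturbedChebyshevU (a : ℕ → ℝ) (c : ℝ) : ℕ → ℝ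
  | 0 => 1
  | 1 => 2 * c
  | n + 2 => 2 * c * perturbedChebyshevU a c (n + 1) - (1 - a n) * perturbedChebyshevU a c n

theorem qHermite_eq_pow_mul_perturbedChebyshevU {q s : ℝ} (hs : s ^ 2 * (1 - q) = 1) (c : ℝ) :
    ∀ n : ℕ, qHermite q n (2 * c * s) = s ^ n * perturbedChebyshevU (fun k => q ^ (k + 1)) c n
  | 0 => by simp [qHermite, perturbedChebyshevU]
  | 1 => by simp only [qHermite, perturbedChebyshevU]; ring
  | n + 2 => by
    have hqInt : qInt q (n + 1) = (1 - q ^ (n + 1)) * s ^ 2 := by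
      rw [qInt]
      linear_combination s ^ 2 * geom_sum_mul_neg q (n + 1) - (∑ i ∈ range (n + 1), q ^ i) * hs
    simp only [qHermite, perturbedChebyshevU]
    rw [qHermite_eq_pow_mul_perturbedChebyshevU hs c (n + 1), qHermite_eq_pow_mul_perturbedChebyshevU hs c n, hqInt]
    ring

theorem le_exp_sum_of_coupled_recurrence {u v b : ℕ → ℝ} (hb : ∀ n, 0 ≤ b n)
    (hu₀ : u 0 ≤ 1) (hv₀ : v 0 ≤ 1)
    (hu : ∀ n, u (n + 1) ≤ u n + b n * v n) (hv : ∀ n, v (n + 1) ≤ v n + u n) (n : ℕ) :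
    u n ≤ exp (∑ k ∈ range n, (k + 1) * b k) ∧
      v n ≤ (n + 1) * exp (∑ k ∈ range n, (k + 1) * b k) := by
  induction n with
  | zero => simpa using ⟨hu₀, hv₀⟩
  | succ n ih =>
    set K := exp (∑ k ∈ range n, (k + 1) * b k)
    have hstep : K * (1 + (n + 1) * b n) ≤ exp (∑ k ∈ range (n + 1), (k + 1) * b k) := by
      rw [sum_range_succ, exp_add]
      gcongr
      linarith [add_one_le_exp ((n + 1) * b n)]
    have hK_le : K ≤ exp (∑ k ∈ range (n + 1), (k + 1) * b k) :=
      (le_mul_of_one_le_right (exp_pos _).le (by nlinarith [hb n])).trans hstep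
    have hbv : b n * v n ≤ b n * ((n + 1) * K) := mul_le_mul_of_nonneg_left ih.2 (hb n)
    push_cast
    constructor
    · linarith [hu n, ih.1]
    · calc v (n + 1) ≤ (n + 1 + 1) * K := by linarith [hv n, ih.1, ih.2]
        _ ≤ _ := by gcongr

theorem abs_perturbedChebyshevU_le (a : ℕ → ℝ) {c : ℝ} (hc : |c| ≤ 1) (n : ℕ) :
    |perturbedChebyshevU a c n| ≤ (n + 1) * exp (∑ k ∈ range n, (k + 1) * |a k|) := by
  set p := perturbedChebyshevU a c
  obtain ⟨z, hz_re, hz_norm⟩ : ∃ z : ℂ, z.re = c ∧ ‖z‖ = 1 :=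
    ⟨Complex.exp (arccos c * Complex.I),
      by rw [Complex.exp_ofReal_mul_I_re, cos_arccos (abs_le.1 hc).1 (abs_le.1 hc).2],
      Complex.norm_exp_ofReal_mul_I _⟩
  have hz_add : z + starRingEnd ℂ z = 2 * c := by rw [Complex.add_conj, hz_re]; push_cast; ring
  have hz_mul : z * starRingEnd ℂ z = 1 := by
    rw [Complex.mul_conj, Complex.normSq_eq_norm_sq, hz_norm]; norm_num
  have norm_p (m : ℕ) : ‖(p m : ℂ)‖ = |p m| := by rw [Complex.norm_real, Real.norm_eq_abs]
  set f : ℕ → ℂ := fun m => p (m + 1) - z * p m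
  have hf₀ : f 0 = starRingEnd ℂ z := by
    simp only [f, p, perturbedChebyshevU]; push_cast
    linear_combination -hz_add
  have hf_succ (m : ℕ) : f (m + 1) = starRingEnd ℂ z * f m + a m * p m := by
    have hp : p (m + 2) = 2 * c * p (m + 1) - (1 - a m) * p m := rfl
    simp only [f, hp]; push_cast
    linear_combination (p m : ℂ) * hz_mul - (p (m + 1) : ℂ) * hz_add
  refine (le_exp_sum_of_coupled_recurrence (u := fun m => ‖f m‖) (v := fun m => |p m|)
    (fun m => abs_nonneg (a m)) ?_ ?_ (fun m => ?_) (fun m => ?_) n).2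
  · simp [hf₀, hz_norm]
  · simp [p, perturbedChebyshevU]
  · calc ‖f (m + 1)‖ ≤ ‖starRingEnd ℂ z * f m‖ + ‖(a m : ℂ) * p m‖ := by
          rw [hf_succ]; exact norm_add_le _ _
      _ = ‖f m‖ + |a m| * |p m| := by
          rw [norm_mul, norm_mul, RCLike.norm_conj, hz_norm, one_mul, norm_p, Complex.norm_real,
            Real.norm_eq_abs]
  · calc |p (m + 1)| = ‖f m + z * p m‖ := by rw [← norm_p]; simp only [f, sub_add_cancel]
      _ ≤ |p m| + ‖f m‖ := by
          rw [add_comm |p m|, ← one_mul |p m|, ← hz_norm, ← norm_p, ← norm_mul]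
          exact norm_add_le _ _

theorem sum_range_succ_mul_pow_succ_le {r : ℝ} (hr₀ : 0 ≤ r) (hr₁ : r < 1) (n : ℕ) :
    ∑ k ∈ range n, ((k : ℝ) + 1) * r ^ (k + 1) ≤ r / (1 - r) ^ 2 := by
  have hr : ‖r‖ < 1 := by rwa [Real.norm_of_nonneg hr₀]
  have hsummable : Summable fun k : ℕ => (k : ℝ) * r ^ k := by
    simpa using summable_pow_mul_geometric_of_norm_lt_one 1 hr
  calc ∑ k ∈ range n, ((k : ℝ) + 1) * r ^ (k + 1) = ∑ k ∈ range (n + 1), (k : ℝ) * r ^ k := by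
        rw [sum_range_succ']; push_cast; simp
    _ ≤ ∑' k : ℕ, (k : ℝ) * r ^ k := hsummable.sum_le_tsum _ fun k _ => by positivity
    _ = r / (1 - r) ^ 2 := tsum_coe_mul_geometric_of_norm_lt_one hr

/-- The growth bound used in Corollary 3: for `|q| < 1` there is a constant `C > 0`
such that `|H_n(x|q)| ≤ C (n+1) (1-q)^{-n/2}` whenever `x² ≤ 4/(1-q)`. -/
theorem qHermite_bound (q : ℝ) (hq : |q| < 1) :
    ∃ C : ℝ, 0 < C ∧ ∀ (n : ℕ) (x : ℝ), x ^ 2 ≤ 4 / (1 - q) →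
      |qHermite q n x| ≤ C * (n + 1) * (1 - q) ^ (-(n : ℝ) / 2) := by
  have h1q : 0 < 1 - q := by linarith [le_abs_self q]
  refine ⟨exp (|q| / (1 - |q|) ^ 2), exp_pos _, fun n x hx => ?_⟩
  set s := (1 - q) ^ (-(1 / 2 : ℝ))
  have hs_pos : 0 < s := rpow_pos_of_pos h1q _
  have hs_pow (m : ℕ) : s ^ m = (1 - q) ^ (-(m : ℝ) / 2) := by
    rw [← rpow_natCast, ← rpow_mul h1q.le]; ring_nf
  have hs : s ^ 2 * (1 - q) = 1 := by
    rw [hs_pow]; norm_num [rpow_neg_one, h1q.ne']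
  set c := x / (2 * s)
  have hx_eq : x = 2 * c * s := by simp only [c]; field_simp
  have hc : |c| ≤ 1 := by
    rw [← sq_le_one_iff_abs_le_one, div_pow, div_le_one (by positivity), mul_pow]
    rw [le_div_iff₀ h1q] at hx
    nlinarith
  have hsum : ∑ k ∈ range n, ((k : ℝ) + 1) * |q ^ (k + 1)| ≤ |q| / (1 - |q|) ^ 2 := by
    simpa only [abs_pow] using sum_range_succ_mul_pow_succ_le (abs_nonneg q) hq n
  rw [hx_eq, qHermite_eq_pow_mul_perturbedChebyshevU hs, abs_mul, abs_of_pos (pow_pos hs_pos n), hs_pow]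
  calc (1 - q) ^ (-(n : ℝ) / 2) * |perturbedChebyshevU (fun k => q ^ (k + 1)) c n|
      ≤ (1 - q) ^ (-(n : ℝ) / 2) * ((n + 1) * exp (|q| / (1 - |q|) ^ 2)) := by
        gcongr
        exact (abs_perturbedChebyshevU_le _ hc n).trans (by gcongr)
    _ = exp (|q| / (1 - |q|) ^ 2) * (n + 1) * (1 - q) ^ (-(n : ℝ) / 2) := by ring
end
end

section
/- Let q be a real number with q < 0. Then for every n ≥ 0 and every x ∈ ℝ, B_n(x|q) = (−1)^{n(n−1)/2} · |q|^{n(n−2)/2} · H_n(−√|q|·x | 1/q), where |q|^{n(n−2)/2} denotes the real power of the positive real number |q|. -/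
open MeasureTheory Finset

noncomputable section

/-- The polynomials `B_n(x|q)`, as functions on `ℝ`:
`B_{-1} = 0`, `B_0 = 1`, `B_{n+1}(x) = -q^n x B_n(x) + q^{n-1} [n]_q B_{n-1}(x)`. -/
def Bpoly (q : ℝ) : ℕ → ℝ → ℝ
  | 0 => fun _ => 1
  | 1 => fun x => -x
  | n + 2 => fun x => -(q ^ (n + 1)) * x * Bpoly q (n + 1) x + q ^ n * qInt q (n + 1) * Bpoly q n x

/-!
If `μ ^ 2 = -q`, the substitution `y = μ x` carries the recurrence of `B_n(x|q)` into that of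
`H_n(y|1/q)` up to scalars `λ_n`, because `[n+1]_{1/q} = q^{-n} [n+1]_q`: one needs
`λ_{n+1} = q^{n-1} μ λ_n`, i.e. `λ_n = q^{n(n-3)/2} μ^n`. For `q < 0` and `μ = -√|q|` this is
`(-1)^{n(n-1)/2} |q|^{n(n-2)/2}`.
-/

lemma qInt_inv {q : ℝ} (hq : q ≠ 0) (n : ℕ) : qInt q⁻¹ (n + 1) = q⁻¹ ^ n * qInt q (n + 1) := by
  rw [qInt, qInt, Finset.mul_sum, ← Finset.sum_range_reflect]
  refine Finset.sum_congr rfl fun i hi => ?_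
  have hi : i ≤ n := Nat.lt_succ_iff.mp (Finset.mem_range.mp hi)
  rw [Nat.add_sub_cancel, ← Nat.sub_add_cancel hi, pow_add, Nat.add_sub_cancel, inv_pow, inv_pow,
    mul_assoc, inv_mul_cancel₀ (pow_ne_zero i hq), mul_one]

def hermiteScale (q μ : ℝ) : ℕ → ℝ
  | 0 => 1
  | n + 1 => q ^ ((n : ℤ) - 1) * μ * hermiteScale q μ n

section hermiteScale

variable {q μ : ℝ} (hq : q ≠ 0) (hμ : μ ^ 2 = -q)
include hq hμ

lemma hermiteScale_succ_mul (n : ℕ) :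
    hermiteScale q μ (n + 1) * μ = -q ^ n * hermiteScale q μ n := calc
  _ = q ^ n / q * μ ^ 2 * hermiteScale q μ n := by
    rw [hermiteScale, zpow_natCast_sub_one₀ hq]; ring
  _ = -q ^ n * hermiteScale q μ n := by rw [hμ]; field_simp

lemma hermiteScale_add_two (n : ℕ) :
    hermiteScale q μ (n + 2) = -q ^ (2 * n) * hermiteScale q μ n := by
  rw [hermiteScale, Nat.cast_succ, add_sub_cancel_right, zpow_natCast, mul_assoc,
    mul_comm μ, hermiteScale_succ_mul hq hμ, two_mul, pow_add]
  ring

theorem Bpoly_eq_hermiteScale_mul_qHermite :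
    ∀ n x, Bpoly q n x = hermiteScale q μ n * qHermite q⁻¹ n (μ * x)
  | 0, x => by simp [Bpoly, qHermite, hermiteScale]
  | 1, x => by
    simp only [Bpoly, qHermite]
    linear_combination (-x) * hermiteScale_succ_mul hq hμ 0 + x * hermiteScale.eq_1 q μ
  | n + 2, x => by
    have e₁ := hermiteScale_succ_mul hq hμ (n + 1)
    have e₂ : hermiteScale q μ (n + 2) * q⁻¹ ^ n = -q ^ n * hermiteScale q μ n := by
      rw [hermiteScale_add_two hq hμ, two_mul, pow_add, inv_pow]
      field_simp
    simp only [Bpoly, qHermite, qInt_inv hq, Bpoly_eq_hermiteScale_mul_qHermite (n + 1) x,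
      Bpoly_eq_hermiteScale_mul_qHermite n x]
    linear_combination (-x * qHermite q⁻¹ (n + 1) (μ * x)) * e₁
      + (qInt q (n + 1) * qHermite q⁻¹ n (μ * x)) * e₂

end hermiteScale

theorem hermiteScale_of_neg {q : ℝ} (hq : q < 0) (n : ℕ) :
    hermiteScale q (-√|q|) n = (-1) ^ (n * (n - 1) / 2) * |q| ^ ((n : ℝ) * (n - 2) / 2) := by
  induction n with
  | zero => simp [hermiteScale]
  | succ n ih =>
    have ha : 0 < |q| := abs_pos.mpr hq.ne
    have hpow : |q| ^ (((n + 1 : ℕ) : ℝ) * ((n + 1 : ℕ) - 2) / 2)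
        = |q| ^ ((n : ℝ) * (n - 2) / 2) * |q| ^ n * √|q| / |q| := by
      rw [Real.sqrt_eq_rpow, ← Real.rpow_natCast, ← Real.rpow_add ha, ← Real.rpow_add ha,
        ← Real.rpow_sub_one ha.ne']
      congr 1
      push_cast
      ring
    have hq' : q = -|q| := by rw [abs_of_neg hq, neg_neg]
    rw [hermiteScale, ih, zpow_natCast_sub_one₀ hq.ne, Nat.triangle_succ, hpow, pow_add, hq',
      neg_pow, abs_neg, abs_abs]
    field_simp

/-- Identity (5), case `q < 0`:
`B_n(x|q) = (-1)^{n(n-1)/2} |q|^{n(n-2)/2} H_n(-√|q| x | 1/q)`, where `|q|^{n(n-2)/2}` is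
the real power of the positive real `|q|`. -/
theorem Bpoly_eq_qHermite_of_neg (q : ℝ) (hq : q < 0) (n : ℕ) (x : ℝ) :
    Bpoly q n x =
      (-1) ^ (n * (n - 1) / 2) * |q| ^ (((n : ℝ) * ((n : ℝ) - 2)) / 2) *
        qHermite (1 / q) n (-Real.sqrt |q| * x) := by
  have hμ : (-√|q|) ^ 2 = -q := by rw [neg_sq, Real.sq_sqrt (abs_nonneg q), abs_of_neg hq]
  rw [Bpoly_eq_hermiteScale_mul_qHermite hq.ne hμ, hermiteScale_of_neg hq, one_div]
end
end

section
/- For every pair of real numbers x and q, there is no (nonzero, nonnegative) finite Borel measure μ on ℝ with finite moments of all orders such that ∫ u^n dμ(u) = H_n(x|q) for all n ≥ 0. (In other words, the sequence (H_n(x|q))_{n≥0} is never a Hamburger moment sequence of a positive measure, for any value of x.) -/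
open MeasureTheory Finset

noncomputable section

open MeasureTheory

/-- The sequence `(H_n(x|q))_{n≥0}` is never a Hamburger moment sequence: for any reals
`x, q` there is no nonzero (nonnegative) finite Borel measure `μ` on `ℝ` with finite
moments of all orders such that `∫ uⁿ dμ(u) = H_n(x|q)` for all `n ≥ 0`. -/
theorem qHermite_not_moment_sequence (x q : ℝ) :
    ¬ ∃ μ : Measure ℝ, μ ≠ 0 ∧ IsFiniteMeasure μ ∧
        (∀ n : ℕ, Integrable (fun u => u ^ n) μ) ∧
        (∀ n : ℕ, ∫ u, u ^ n ∂μ = qHermite q n x) := by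
  rintro ⟨μ, -, hfin, hint, hmom⟩
  have h0 := hmom 0
  have h1 := hmom 1
  have h2 := hmom 2
  simp [qHermite, qInt] at h0 h1 h2
  have hi1 : Integrable (fun u : ℝ => (2 * x) * u ^ 1) μ := (hint 1).const_mul _
  have hi0 : Integrable (fun u : ℝ => (x ^ 2) * u ^ 0) μ := (hint 0).const_mul _
  have key : ∫ u, (u - x) ^ 2 ∂μ = -1 := by
    have hfun : (fun u : ℝ => (u - x) ^ 2)
        = fun u : ℝ => (u ^ 2 - (2 * x) * u ^ 1) + (x ^ 2) * u ^ 0 := by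
      funext u; ring
    have A : ∫ u, ((u ^ 2 - (2 * x) * u ^ 1) + (x ^ 2) * u ^ 0) ∂μ
        = (∫ u, (u ^ 2 - (2 * x) * u ^ 1) ∂μ) + ∫ u, (x ^ 2) * u ^ 0 ∂μ :=
      integral_add ((hint 2).sub hi1) hi0
    have B : ∫ u, (u ^ 2 - (2 * x) * u ^ 1) ∂μ
        = (∫ u, u ^ 2 ∂μ) - ∫ u, (2 * x) * u ^ 1 ∂μ :=
      integral_sub (hint 2) hi1
    rw [hfun, A, B, integral_const_mul, integral_const_mul]
    simp only [pow_one, pow_zero]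
    rw [h1, h2, integral_const, smul_eq_mul, h0]
    ring
  have hnn : 0 ≤ ∫ u, (u - x) ^ 2 ∂μ :=
    integral_nonneg fun u => sq_nonneg _
  rw [key] at hnn
  linarith
end
end
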